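/- arXiv:2011.03896 — 2 statements merged into one kernel-verified Lean document; each statement's English description precedes it below -/
import Mathlib

section
/- Fix integers K ≥ m ≥ 1, ε > 0, c : T_{K,m} → [0,1/K], and x, y ∈ [0,1]^K with ‖x − y‖_{ℓ∞} ≤ ε. Then the outputs P_{c,ε}(x) and P_{c,ε}(y) of the partition algorithm satisfy d_{T_{K,m}}(P_{c,ε}(x), P_{c,ε}(y)) ≤ 1, where d_{T_{K,m}} is the graph distance in the tree T_{K,m}. -/
open Classical

noncomputable section

namespace MPB

variable (K m : ℕ)

/-- Max of `x` over a finite set of coordinates. -/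
def fmax (x : Fin K → ℝ) (S : Finset (Fin K)) : ℝ := sSup (x '' ↑S)

/-- Min of `x` over a finite set of coordinates. -/
def fmin (x : Fin K → ℝ) (S : Finset (Fin K)) : ℝ := sInf (x '' ↑S)

/-- range_B(x) = max_{k∈B} x(k) - min_{k∈B} x(k). -/
def rangeX (x : Fin K → ℝ) (B : Finset (Fin K)) : ℝ := fmax K x B - fmin K x B

/-- gap of the child obtained by splitting `B` into `T > B \ T`:
gap = min_{k∈T} x(k) - max_{ℓ∈B\T} x(ℓ). -/
def gapX (x : Fin K → ℝ) (T B : Finset (Fin K)) : ℝ := fmin K x T - fmax K x (B \ T)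

/-- i(P): the largest `i` such that the first `i` parts of the ordered partition `L`
have total size at most `m`. -/
def iIdx (L : List (Finset (Fin K))) : ℕ :=
  Nat.findGreatest (fun i => ((L.take i).map Finset.card).sum ≤ m) L.length

/-- A(P): the union of the first i(P) parts (the coordinates already identified as
belonging to the top m). -/
def Aset (L : List (Finset (Fin K))) : Finset (Fin K) :=
  (L.take (iIdx K m L)).foldr (· ∪ ·) ∅

/-- B(P): the currently undecided part; `∅` if `|A(P)| = m`, else the part S_{i(P)+1}. -/
def Bset (L : List (Finset (Fin K))) : Finset (Fin K) :=
  if (Aset K m L).card = m then ∅ else L.getD (iIdx K m L) ∅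

/-- A vertex of the tree T_{K,m} is encoded by the sequence of splits leading to it from
the root (head = most recently chosen top part): this recovers its underlying ordered
partition, by splitting at each step the then-current undecided set B into `T > B \ T`. -/
def partitionOf : List (Finset (Fin K)) → List (Finset (Fin K))
  | [] => [Finset.univ]
  | T :: l =>
    let L := partitionOf l
    let i := iIdx K m L
    L.take i ++ [T, L.getD i ∅ \ T] ++ L.drop (i + 1)

/-- A(P) for a vertex of T_{K,m}. -/
def Anode (l : List (Finset (Fin K))) : Finset (Fin K) := Aset K m (partitionOf K m l)

/-- B(P) for a vertex of T_{K,m}. -/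
def Bnode (l : List (Finset (Fin K))) : Finset (Fin K) := Bset K m (partitionOf K m l)

/-- Membership in T_{K,m}: each successive split must cut the current undecided set B
into a nonempty strict subset (the new top part) and the rest. The root is `[]`, a
vertex is a leaf iff its `Bnode` is empty, `T :: l` is a child of `l`, and the ancestors
of a vertex are exactly its list suffixes. -/
def Valid : List (Finset (Fin K)) → Prop
  | [] => True
  | T :: l => Valid l ∧ T.Nonempty ∧ T ⊂ Bnode K m l

/-- The elements of `B` sorted by `x` in (weakly) decreasing order,
ties broken by coordinate index (stability of merge sort). -/
def sortedB (x : Fin K → ℝ) (B : Finset (Fin K)) : List (Fin K) :=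
  (B.sort (· ≤ ·)).mergeSort (fun a b => decide (x b ≤ x a))

/-- The set `{a_1, …, a_j}` of the `j` largest coordinates of `B` under `x`. -/
def topSet (x : Fin K → ℝ) (B : Finset (Fin K)) (j : ℕ) : Finset (Fin K) :=
  ((sortedB K x B).take j).toFinset

/-- Line 7 of Algorithm 1: the algorithm, currently at the vertex `l`, returns `l`
because for some ancestor `q ⪯ l` and some child `q_j` of `q` (splitting B(q) at the
`j`-th position of the `x`-sorted order), the quantity `gap_{q_j}(x) - c(q)·range_q(x)`
is within `(d(l,q)+1)·6ε` of zero. -/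
def stopAt (c : List (Finset (Fin K)) → ℝ) (ε : ℝ) (x : Fin K → ℝ)
    (l : List (Finset (Fin K))) : Prop :=
  ∃ q ∈ l.tails, ∃ j, 1 ≤ j ∧ j < (Bnode K m q).card ∧
    |gapX K x (topSet K x (Bnode K m q) j) (Bnode K m q) - c q * rangeX K x (Bnode K m q)|
      ≤ ((l.length - q.length + 1 : ℕ) : ℝ) * (6 * ε)

/-- Lines 10-15 of Algorithm 1: move from `l` to the child `l_j` for the smallest
`j ∈ {1, …, ℓ-1}` with `gap_{l_j}(x) ≥ c(l)·range_l(x)`. -/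
def descend (c : List (Finset (Fin K)) → ℝ) (x : Fin K → ℝ)
    (l : List (Finset (Fin K))) : List (Finset (Fin K)) :=
  if h : ∃ j, 1 ≤ j ∧ j < (Bnode K m l).card ∧
      c l * rangeX K x (Bnode K m l)
        ≤ gapX K x (topSet K x (Bnode K m l) j) (Bnode K m l)
  then topSet K x (Bnode K m l) (Nat.find h) :: l
  else l

/-- The while loop of Algorithm 1, with fuel (the tree T_{K,m} has depth < K, so fuel K
suffices for the loop to terminate as in the paper). -/
def run (c : List (Finset (Fin K)) → ℝ) (ε : ℝ) (x : Fin K → ℝ) :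
    ℕ → List (Finset (Fin K)) → List (Finset (Fin K))
  | 0, l => l
  | n + 1, l =>
    if Bnode K m l = ∅ then l
    else if stopAt K m c ε x l then l
    else run c ε x n (descend K m c x l)

/-- The vertex P_{c,ε}(x) ∈ T_{K,m} output by Algorithm 1 on input x. The vertices
visited by the while loop are exactly the suffixes of the output. -/
def Pmap (c : List (Finset (Fin K)) → ℝ) (ε : ℝ) (x : Fin K → ℝ) :
    List (Finset (Fin K)) :=
  run K m c ε x K []

/-!
A split of `B(P)` is taken or refused according to the sign of its score
`gap - c·range`. The `j`-th largest value of `x` on `B` is an order statistic, hence moves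
by at most `ε` when `x` does, so gaps and ranges move by at most `2ε` and, as `c ≤ 1`,
scores by at most `4ε`. If the run on `x` does not stop at a vertex, all its scores there
exceed `6ε` in absolute value, so the run on `y` makes the same choice and the chosen gap
exceeds `2ε`, which forces the same top set. If the run on `x` stops at `P` because some
score is within `(d+1)·6ε` of zero, the corresponding score for `y` is within
`(d+2)·6ε` of zero, so the run on `y` stops at the latest at a child of `P`.
-/

section OrderStatistics

variable {K : ℕ} {x y : Fin K → ℝ} {S B U : Finset (Fin K)} {ε : ℝ}

lemma le_fmax {a : Fin K} (ha : a ∈ S) : x a ≤ fmax K x S :=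
  le_csSup (S.finite_toSet.image x).bddAbove (Set.mem_image_of_mem x ha)

lemma fmin_le {a : Fin K} (ha : a ∈ S) : fmin K x S ≤ x a :=
  csInf_le (S.finite_toSet.image x).bddBelow (Set.mem_image_of_mem x ha)

lemma fmax_le (hS : S.Nonempty) {v : ℝ} (h : ∀ a ∈ S, x a ≤ v) : fmax K x S ≤ v :=
  csSup_le ((Finset.coe_nonempty.mpr hS).image x) (by rintro _ ⟨a, ha, rfl⟩; exact h a ha)

lemma le_fmin (hS : S.Nonempty) {v : ℝ} (h : ∀ a ∈ S, v ≤ x a) : v ≤ fmin K x S :=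
  le_csInf ((Finset.coe_nonempty.mpr hS).image x) (by rintro _ ⟨a, ha, rfl⟩; exact h a ha)

lemma rangeX_nonneg (hS : S.Nonempty) : 0 ≤ rangeX K x S := by
  obtain ⟨a, ha⟩ := hS
  exact sub_nonneg.mpr ((fmin_le ha).trans (le_fmax ha))

lemma fmax_le_fmax_add (hS : S.Nonempty) (h : ∀ i, x i ≤ y i + ε) :
    fmax K x S ≤ fmax K y S + ε :=
  fmax_le hS fun a ha => (h a).trans (add_le_add_left (le_fmax ha) ε)

lemma fmin_le_fmin_add (hS : S.Nonempty) (h : ∀ i, x i ≤ y i + ε) :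
    fmin K x S ≤ fmin K y S + ε :=
  sub_le_iff_le_add.mp <| le_fmin (x := y) hS fun a ha =>
    sub_le_iff_le_add.mpr ((fmin_le ha).trans (h a))

lemma abs_rangeX_sub_le (hS : S.Nonempty) (hxy : ∀ i, |x i - y i| ≤ ε) :
    |rangeX K x S - rangeX K y S| ≤ 2 * ε := by
  have hx i : x i ≤ y i + ε := by linarith [(abs_sub_le_iff.mp (hxy i)).1]
  have hy i : y i ≤ x i + ε := by linarith [(abs_sub_le_iff.mp (hxy i)).2]
  rw [rangeX, rangeX, abs_sub_le_iff]
  constructor <;> linarith [fmax_le_fmax_add hS hx, fmax_le_fmax_add hS hy,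
    fmin_le_fmin_add hS hx, fmin_le_fmin_add hS hy]

lemma sortedB_perm (x : Fin K → ℝ) (B : Finset (Fin K)) :
    (sortedB K x B).Perm (B.sort (· ≤ ·)) :=
  List.mergeSort_perm _ _

lemma sortedB_nodup (x : Fin K → ℝ) (B : Finset (Fin K)) : (sortedB K x B).Nodup :=
  (sortedB_perm x B).nodup_iff.mpr (Finset.sort_nodup _ _)

lemma sortedB_toFinset (x : Fin K → ℝ) (B : Finset (Fin K)) : (sortedB K x B).toFinset = B := by
  rw [List.toFinset_eq_of_perm _ _ (sortedB_perm x B), Finset.sort_toFinset]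

lemma sortedB_length (x : Fin K → ℝ) (B : Finset (Fin K)) :
    (sortedB K x B).length = B.card :=
  (sortedB_perm x B).length_eq.trans (Finset.length_sort _)

lemma sortedB_pairwise (x : Fin K → ℝ) (B : Finset (Fin K)) :
    (sortedB K x B).Pairwise (fun a b => x b ≤ x a) := by
  have h := List.pairwise_mergeSort (le := fun a b : Fin K => decide (x b ≤ x a))
    (fun a b c hab hbc => by simp only [decide_eq_true_eq] at *; exact hbc.trans hab)
    (fun a b => by simpa only [Bool.or_eq_true, decide_eq_true_eq] using le_total (x b) (x a))
    (B.sort (· ≤ ·))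
  simpa [sortedB] using h

lemma topSet_subset (x : Fin K → ℝ) (B : Finset (Fin K)) (j : ℕ) : topSet K x B j ⊆ B := by
  intro a ha
  rw [← sortedB_toFinset x B, List.mem_toFinset]
  exact List.mem_of_mem_take (List.mem_toFinset.mp ha)

lemma card_topSet (x : Fin K → ℝ) {j : ℕ} (hj : j ≤ B.card) : (topSet K x B j).card = j := by
  rw [topSet, List.toFinset_card_of_nodup ((List.take_sublist _ _).nodup (sortedB_nodup x B)),
    List.length_take, sortedB_length, min_eq_left hj]

lemma card_sdiff_topSet (x : Fin K → ℝ) {j : ℕ} (hj : j ≤ B.card) :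
    (B \ topSet K x B j).card = B.card - j := by
  rw [Finset.card_sdiff_of_subset (topSet_subset x B j), card_topSet x hj]

lemma topSet_nonempty (x : Fin K → ℝ) {j : ℕ} (hj1 : 1 ≤ j) (hj : j ≤ B.card) :
    (topSet K x B j).Nonempty := by
  rw [← Finset.card_pos, card_topSet x hj]
  exact hj1

lemma sdiff_topSet_nonempty (x : Fin K → ℝ) {j : ℕ} (hj : j < B.card) :
    (B \ topSet K x B j).Nonempty := by
  rw [← Finset.card_pos, card_sdiff_topSet x hj.le]
  omega

lemma le_of_mem_topSet_of_mem_sdiff {j : ℕ} {a b : Fin K} (ha : a ∈ topSet K x B j)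
    (hb : b ∈ B \ topSet K x B j) : x b ≤ x a := by
  have hs := sortedB_pairwise x B
  rw [← List.take_append_drop j (sortedB K x B)] at hs
  have hb' : b ∈ (sortedB K x B).drop j := by
    obtain ⟨hbB, hbT⟩ := Finset.mem_sdiff.mp hb
    rw [← sortedB_toFinset x B, List.mem_toFinset] at hbB
    rw [topSet, List.mem_toFinset] at hbT
    rw [← List.take_append_drop j (sortedB K x B), List.mem_append] at hbB
    exact hbB.resolve_left hbT
  exact (List.pairwise_append.mp hs).2.2 a (List.mem_toFinset.mp ha) b hb'

lemma topSet_eq_of_forall_lt {T : Finset (Fin K)} {j : ℕ} (hTB : T ⊆ B) (hT : T.card = j)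
    (hsep : ∀ a ∈ T, ∀ b ∈ B \ T, x b < x a) : topSet K x B j = T := by
  have hj : j ≤ B.card := hT ▸ Finset.card_le_card hTB
  have hcard : (topSet K x B j).card = T.card := by rw [card_topSet x hj, hT]
  by_contra hne
  obtain ⟨b, hbtop, hbT⟩ := Finset.not_subset.mp
    fun h => hne (Finset.eq_of_subset_of_card_le h hcard.ge)
  obtain ⟨a, haT, hatop⟩ := Finset.not_subset.mp
    fun h => hne (Finset.eq_of_subset_of_card_le h hcard.le).symm
  have hba := le_of_mem_topSet_of_mem_sdiff hbtop (Finset.mem_sdiff.mpr ⟨hTB haT, hatop⟩)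
  exact hba.not_gt (hsep a haT b (Finset.mem_sdiff.mpr ⟨topSet_subset x B j hbtop, hbT⟩))

lemma fmin_le_fmin_topSet {j : ℕ} (hj1 : 1 ≤ j) (hj : j ≤ B.card) (hUB : U ⊆ B)
    (hU : j ≤ U.card) : fmin K x U ≤ fmin K x (topSet K x B j) := by
  by_cases hUT : U ⊆ topSet K x B j
  · rw [Finset.eq_of_subset_of_card_le hUT (by rwa [card_topSet x hj])]
  · obtain ⟨a, haU, haT⟩ := Finset.not_subset.mp hUT
    exact (fmin_le haU).trans <| le_fmin (topSet_nonempty x hj1 hj) fun b hb =>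
      le_of_mem_topSet_of_mem_sdiff hb (Finset.mem_sdiff.mpr ⟨hUB haU, haT⟩)

lemma fmax_sdiff_topSet_le_fmax {j : ℕ} (hj : j < B.card) (hUB : U ⊆ B)
    (hU : B.card - j ≤ U.card) : fmax K x (B \ topSet K x B j) ≤ fmax K x U := by
  by_cases hUT : U ⊆ B \ topSet K x B j
  · rw [Finset.eq_of_subset_of_card_le hUT (by rwa [card_sdiff_topSet x hj.le])]
  · obtain ⟨a, haU, haT⟩ := Finset.not_subset.mp hUT
    have haTop : a ∈ topSet K x B j := by
      by_contra h
      exact haT (Finset.mem_sdiff.mpr ⟨hUB haU, h⟩)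
    exact (fmax_le (sdiff_topSet_nonempty x hj) fun b hb =>
      le_of_mem_topSet_of_mem_sdiff haTop hb).trans (le_fmax haU)

lemma fmin_topSet_le_add {j : ℕ} (hj1 : 1 ≤ j) (hj : j ≤ B.card) (h : ∀ i, x i ≤ y i + ε) :
    fmin K x (topSet K x B j) ≤ fmin K y (topSet K y B j) + ε :=
  (fmin_le_fmin_add (topSet_nonempty x hj1 hj) h).trans <| add_le_add_left
    (fmin_le_fmin_topSet hj1 hj (topSet_subset x B j) (card_topSet x hj).ge) ε

lemma fmax_sdiff_topSet_le_add {j : ℕ} (hj : j < B.card) (h : ∀ i, x i ≤ y i + ε) :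
    fmax K x (B \ topSet K x B j) ≤ fmax K y (B \ topSet K y B j) + ε :=
  (fmax_sdiff_topSet_le_fmax hj Finset.sdiff_subset (card_sdiff_topSet y hj.le).ge).trans
    (fmax_le_fmax_add (sdiff_topSet_nonempty y hj) h)

lemma abs_gapX_topSet_sub_le {j : ℕ} (hj1 : 1 ≤ j) (hj : j < B.card)
    (hxy : ∀ i, |x i - y i| ≤ ε) :
    |gapX K x (topSet K x B j) B - gapX K y (topSet K y B j) B| ≤ 2 * ε := by
  have hx i : x i ≤ y i + ε := by linarith [(abs_sub_le_iff.mp (hxy i)).1]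
  have hy i : y i ≤ x i + ε := by linarith [(abs_sub_le_iff.mp (hxy i)).2]
  rw [gapX, gapX, abs_sub_le_iff]
  constructor <;> linarith [fmin_topSet_le_add hj1 hj.le hx, fmin_topSet_le_add hj1 hj.le hy,
    fmax_sdiff_topSet_le_add hj hx, fmax_sdiff_topSet_le_add hj hy]

lemma topSet_eq_of_two_mul_lt_gapX {j : ℕ} (hj : j ≤ B.card) (hxy : ∀ i, |x i - y i| ≤ ε)
    (hgap : 2 * ε < gapX K x (topSet K x B j) B) : topSet K y B j = topSet K x B j := by
  refine topSet_eq_of_forall_lt (topSet_subset x B j) (card_topSet x hj) fun a ha b hb => ?_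
  have hxa := fmin_le (x := x) ha
  have hxb := le_fmax (x := x) hb
  rw [gapX] at hgap
  linarith [(abs_le.mp (hxy a)).2, (abs_le.mp (hxy b)).1]

end OrderStatistics

section Algorithm

variable {K m : ℕ} {c : List (Finset (Fin K)) → ℝ} {ε : ℝ} {x y : Fin K → ℝ}
  {l : List (Finset (Fin K))}

def splitScore (K m : ℕ) (c : List (Finset (Fin K)) → ℝ) (x : Fin K → ℝ)
    (l : List (Finset (Fin K))) (j : ℕ) : ℝ :=
  gapX K x (topSet K x (Bnode K m l) j) (Bnode K m l) - c l * rangeX K x (Bnode K m l)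

def EqOrAdj (l l' : List (Finset (Fin K))) : Prop :=
  l = l' ∨ (∃ T, l = T :: l') ∨ (∃ T, l' = T :: l)

lemma EqOrAdj.symm {l l' : List (Finset (Fin K))} (h : EqOrAdj l l') : EqOrAdj l' l := by
  rcases h with h | h | h
  exacts [Or.inl h.symm, Or.inr (Or.inr h), Or.inr (Or.inl h)]

lemma Valid.of_suffix {q : List (Finset (Fin K))} (hl : Valid K m l) (hq : q <:+ l) :
    Valid K m q := by
  induction l with
  | nil => rwa [List.suffix_nil.mp hq]
  | cons T l ih =>
    rcases List.suffix_cons_iff.mp hq with h | h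
    · rwa [h]
    · exact ih hl.1 h

lemma abs_splitScore_sub_le (hc : c l ∈ Set.Icc 0 1) (hxy : ∀ i, |x i - y i| ≤ ε) {j : ℕ}
    (hj1 : 1 ≤ j) (hj : j < (Bnode K m l).card) :
    |splitScore K m c x l j - splitScore K m c y l j| ≤ 4 * ε := by
  have hB : (Bnode K m l).Nonempty := Finset.card_pos.mp (Nat.zero_lt_of_lt hj)
  have hrange : |c l * rangeX K x (Bnode K m l) - c l * rangeX K y (Bnode K m l)| ≤ 2 * ε := by
    rw [← mul_sub, abs_mul, abs_of_nonneg hc.1]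
    exact (mul_le_of_le_one_left (abs_nonneg _) hc.2).trans (abs_rangeX_sub_le hB hxy)
  calc |splitScore K m c x l j - splitScore K m c y l j|
      = |(gapX K x (topSet K x (Bnode K m l) j) (Bnode K m l)
          - gapX K y (topSet K y (Bnode K m l) j) (Bnode K m l))
        - (c l * rangeX K x (Bnode K m l) - c l * rangeX K y (Bnode K m l))| := by
        rw [splitScore, splitScore]
        ring_nf
    _ ≤ 2 * ε + 2 * ε :=
      (abs_sub _ _).trans (add_le_add (abs_gapX_topSet_sub_le hj1 hj hxy) hrange)
    _ = 4 * ε := by ring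

lemma lt_abs_splitScore_of_not_stopAt (hns : ¬ stopAt K m c ε x l) {j : ℕ} (hj1 : 1 ≤ j)
    (hj : j < (Bnode K m l).card) : 6 * ε < |splitScore K m c x l j| := by
  by_contra h
  exact hns ⟨l, (List.mem_tails _ _).mpr (List.suffix_refl l), j, hj1, hj,
    by simpa [splitScore] using not_lt.mp h⟩

lemma stopAt_cons_of_stopAt (hε : 0 ≤ ε) (hc : ∀ l, Valid K m l → c l ∈ Set.Icc 0 1)
    (hxy : ∀ i, |x i - y i| ≤ ε) (hl : Valid K m l) (hs : stopAt K m c ε x l)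
    (T : Finset (Fin K)) : stopAt K m c ε y (T :: l) := by
  obtain ⟨q, hq, j, hj1, hj, hscore⟩ := hs
  have hql : q <:+ l := (List.mem_tails _ _).mp hq
  refine ⟨q, (List.mem_tails _ _).mpr (hql.trans (List.suffix_cons T l)), j, hj1, hj, ?_⟩
  have hclose := abs_splitScore_sub_le (hc q (hl.of_suffix hql)) hxy hj1 hj
  have hdepth : ((T :: l).length - q.length + 1 : ℕ) = (l.length - q.length + 1 : ℕ) + 1 := by
    have := hql.length_le
    simp only [List.length_cons]
    omega
  change |splitScore K m c y q j| ≤ _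
  change |splitScore K m c x q j| ≤ _ at hscore
  rw [hdepth, Nat.cast_succ]
  calc |splitScore K m c y q j|
      ≤ |splitScore K m c x q j| + |splitScore K m c x q j - splitScore K m c y q j| :=
        by linarith [abs_sub_abs_le_abs_sub (splitScore K m c y q j) (splitScore K m c x q j),
          abs_sub_comm (splitScore K m c x q j) (splitScore K m c y q j)]
    _ ≤ (l.length - q.length + 1 : ℕ) * (6 * ε) + 4 * ε := add_le_add hscore hclose
    _ ≤ ((l.length - q.length + 1 : ℕ) + 1) * (6 * ε) := by linarith

lemma le_gapX_iff_of_not_stopAt (hc : c l ∈ Set.Icc 0 1) (hxy : ∀ i, |x i - y i| ≤ ε)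
    (hns : ¬ stopAt K m c ε x l) {j : ℕ} (hj1 : 1 ≤ j) (hj : j < (Bnode K m l).card) :
    c l * rangeX K x (Bnode K m l) ≤ gapX K x (topSet K x (Bnode K m l) j) (Bnode K m l) ↔
      c l * rangeX K y (Bnode K m l) ≤ gapX K y (topSet K y (Bnode K m l) j) (Bnode K m l) := by
  have hfar := lt_abs.mp (lt_abs_splitScore_of_not_stopAt hns hj1 hj)
  have hclose := abs_le.mp (abs_splitScore_sub_le hc hxy hj1 hj)
  simp only [splitScore] at hfar hclose
  constructor <;> intro h <;> rcases hfar with hfar | hfar <;> linarith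

lemma descend_eq_self_or_cons (c : List (Finset (Fin K)) → ℝ) (x : Fin K → ℝ)
    (l : List (Finset (Fin K))) : descend K m c x l = l ∨ ∃ T, descend K m c x l = T :: l := by
  unfold descend
  split_ifs
  exacts [Or.inr ⟨_, rfl⟩, Or.inl rfl]

lemma Valid.descend (hl : Valid K m l) : Valid K m (descend K m c x l) := by
  unfold MPB.descend
  split_ifs with h
  · obtain ⟨hj1, hj, -⟩ := Nat.find_spec h
    refine ⟨hl, topSet_nonempty x hj1 hj.le, Finset.ssubset_iff_subset_ne.mpr
      ⟨topSet_subset x _ _, fun heq => ?_⟩⟩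
    have hcard := card_topSet x hj.le
    rw [heq] at hcard
    omega
  · exact hl

lemma descend_eq_of_not_stopAt (hε : 0 ≤ ε) (hc : c l ∈ Set.Icc 0 1)
    (hxy : ∀ i, |x i - y i| ≤ ε) (hns : ¬ stopAt K m c ε x l) :
    descend K m c x l = descend K m c y l := by
  have hiff {j : ℕ} := and_congr_right fun hj1 => and_congr_right fun hj =>
    le_gapX_iff_of_not_stopAt (j := j) hc hxy hns hj1 hj
  unfold descend
  by_cases hex : ∃ j, 1 ≤ j ∧ j < (Bnode K m l).card ∧
      c l * rangeX K x (Bnode K m l) ≤ gapX K x (topSet K x (Bnode K m l) j) (Bnode K m l)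
  · have hey := hex.imp fun _ => hiff.mp
    rw [dif_pos hex, dif_pos hey, Nat.find_congr' hiff]
    obtain ⟨hj1, hj, -⟩ := Nat.find_spec hey
    have hfar := lt_abs_splitScore_of_not_stopAt hns hj1 hj
    have hscore : 0 ≤ splitScore K m c x l (Nat.find hey) :=
      sub_nonneg.mpr (hiff.mpr (Nat.find_spec hey)).2.2
    rw [abs_of_nonneg hscore, splitScore] at hfar
    have hrange := mul_nonneg hc.1
      (rangeX_nonneg (x := x) (Finset.card_pos.mp (Nat.zero_lt_of_lt hj)))
    rw [topSet_eq_of_two_mul_lt_gapX hj.le hxy (by linarith)]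
  · rw [dif_neg hex, dif_neg fun hey => hex (hey.imp fun _ => hiff.mpr)]

lemma run_of_stopAt (hs : stopAt K m c ε x l) : ∀ n, run K m c ε x n l = l
  | 0 => rfl
  | n + 1 => by simp only [run, hs, ite_true, ite_self]

lemma run_of_descend_eq_self (hd : descend K m c x l = l) : ∀ n, run K m c ε x n l = l
  | 0 => rfl
  | n + 1 => by simp only [run, hd, run_of_descend_eq_self hd n, ite_self]

lemma run_succ_of_not_stopAt (hB : Bnode K m l ≠ ∅) (hns : ¬ stopAt K m c ε x l) (n : ℕ) :
    run K m c ε x (n + 1) l = run K m c ε x n (descend K m c x l) := by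
  rw [run, if_neg hB, if_neg hns]

lemma eqOrAdj_run_succ_of_stopAt (hε : 0 ≤ ε) (hc : ∀ l, Valid K m l → c l ∈ Set.Icc 0 1)
    (hxy : ∀ i, |x i - y i| ≤ ε) (hl : Valid K m l) (hB : Bnode K m l ≠ ∅)
    (hs : stopAt K m c ε x l) (n : ℕ) :
    EqOrAdj (run K m c ε x (n + 1) l) (run K m c ε y (n + 1) l) := by
  rw [run_of_stopAt hs]
  by_cases hsy : stopAt K m c ε y l
  · rw [run_of_stopAt hsy]
    exact Or.inl rfl
  rw [run_succ_of_not_stopAt hB hsy]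
  rcases descend_eq_self_or_cons c y l with hd | ⟨T, hd⟩
  · rw [hd, run_of_descend_eq_self hd]
    exact Or.inl rfl
  · rw [hd, run_of_stopAt (stopAt_cons_of_stopAt hε hc hxy hl hs T)]
    exact Or.inr (Or.inr ⟨T, rfl⟩)

lemma eqOrAdj_run (hε : 0 ≤ ε) (hc : ∀ l, Valid K m l → c l ∈ Set.Icc 0 1)
    (hxy : ∀ i, |x i - y i| ≤ ε) (n : ℕ) (hl : Valid K m l) :
    EqOrAdj (run K m c ε x n l) (run K m c ε y n l) := by
  induction n generalizing l with
  | zero => exact Or.inl rfl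
  | succ n ih =>
    have hyx i : |y i - x i| ≤ ε := abs_sub_comm (x i) (y i) ▸ hxy i
    by_cases hB : Bnode K m l = ∅
    · simp only [run, hB, ite_true]
      exact Or.inl rfl
    by_cases hsx : stopAt K m c ε x l
    · exact eqOrAdj_run_succ_of_stopAt hε hc hxy hl hB hsx n
    by_cases hsy : stopAt K m c ε y l
    · exact (eqOrAdj_run_succ_of_stopAt hε hc hyx hl hB hsy n).symm
    rw [run_succ_of_not_stopAt hB hsx, run_succ_of_not_stopAt hB hsy,
      ← descend_eq_of_not_stopAt hε (hc l hl) hxy hsx]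
    exact ih hl.descend

end Algorithm

theorem stmt5_general (K m : ℕ) (ε : ℝ) (hε : 0 < ε)
    (c : List (Finset (Fin K)) → ℝ)
    (hc : ∀ l, Valid K m l → c l ∈ Set.Icc (0 : ℝ) (1 / K))
    (x y : Fin K → ℝ)
    (hxy : ∀ i, |x i - y i| ≤ ε) :
    Pmap K m c ε x = Pmap K m c ε y ∨
      (∃ T, Pmap K m c ε x = T :: Pmap K m c ε y) ∨
      (∃ T, Pmap K m c ε y = T :: Pmap K m c ε x) := by
  have hc' l (hl : Valid K m l) : c l ∈ Set.Icc (0 : ℝ) 1 :=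
    ⟨(hc l hl).1, (hc l hl).2.trans (one_div (K : ℝ) ▸ Nat.cast_inv_le_one K)⟩
  exact eqOrAdj_run hε.le hc' hxy K trivial

/-- Lemma 2.4, item 1: if ‖x - y‖_∞ ≤ ε then the outputs of the partition algorithm on
x and on y are at graph distance at most 1 in the tree T_{K,m} (equal, or one is a
child of the other). -/
theorem stmt5 (K m : ℕ) (hm : 1 ≤ m) (hK : m ≤ K) (ε : ℝ) (hε : 0 < ε)
    (c : List (Finset (Fin K)) → ℝ)
    (hc : ∀ l, Valid K m l → c l ∈ Set.Icc (0 : ℝ) (1 / K))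
    (x y : Fin K → ℝ)
    (hx : ∀ i, x i ∈ Set.Icc (0 : ℝ) 1) (hy : ∀ i, y i ∈ Set.Icc (0 : ℝ) 1)
    (hxy : ∀ i, |x i - y i| ≤ ε) :
    Pmap K m c ε x = Pmap K m c ε y ∨
      (∃ T, Pmap K m c ε x = T :: Pmap K m c ε y) ∨
      (∃ T, Pmap K m c ε y = T :: Pmap K m c ε x) :=
  stmt5_general K m ε hε c hc x y hxy

end MPB
end
end

section
/- Fix integers K ≥ m ≥ 1. For every function G : T_{K,m} → Finset (Fin K) such that G(P) ∈ Feas_P for all P ∈ T_{K,m}, there exists a collision-robust m-coloring F : T_{K,m} → (Fin m → Fin K) such that for every P ∈ T_{K,m}, the map F(P) is injective with image exactly G(P). -/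
open Classical

noncomputable section

namespace MPB

variable (K m : ℕ)

/-- Feas_P: the m-element subsets S of [K] that comprise the top m coordinates in some
total ordering of the coordinates extending the ordered partition of P (realized by an
injective weight function w : Fin K → ℝ that is larger on earlier parts). -/
def Feas (P : List (Finset (Fin K))) (S : Finset (Fin K)) : Prop :=
  S.card = m ∧ ∃ w : Fin K → ℝ, Function.Injective w ∧
    (∀ a b : ℕ, a < b →
      ∀ k ∈ (partitionOf K m P).getD a ∅, ∀ l ∈ (partitionOf K m P).getD b ∅, w l < w k) ∧
    (∀ s ∈ S, ∀ t ∉ S, w t < w s)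

section Aux

variable {K' m' : ℕ}

lemma card_aux (f : Fin m' → Fin K') (S : Finset (Fin K'))
    (hf : Function.Injective f) (hS : S.card = m') :
    ((Finset.univ.filter (fun i => f i ∈ S))ᶜ).card
      = (S \ Finset.univ.image f).card := by
  classical
  have h1 : (Finset.univ.filter (fun i => f i ∈ S)).image f
      = S ∩ Finset.univ.image f := by
    ext k; simp only [Finset.mem_image, Finset.mem_filter, Finset.mem_inter,
      Finset.mem_univ, true_and]
    constructor
    · rintro ⟨i, hi, rfl⟩; exact ⟨hi, i, rfl⟩
    · rintro ⟨hk, i, rfl⟩; exact ⟨i, hk, rfl⟩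
  have h2 : (Finset.univ.filter (fun i => f i ∈ S)).card
      = (S ∩ Finset.univ.image f).card := by
    rw [← h1, Finset.card_image_of_injective _ hf]
  have h3 : (S \ Finset.univ.image f).card
      = S.card - (S ∩ Finset.univ.image f).card := by
    have : S \ Finset.univ.image f = S \ (S ∩ Finset.univ.image f) := by
      ext k; simp only [Finset.mem_sdiff, Finset.mem_inter]; tauto
    rw [this, Finset.card_sdiff_of_subset Finset.inter_subset_left]
  have h4 : (S ∩ Finset.univ.image f).card ≤ S.card :=
    Finset.card_le_card Finset.inter_subset_left
  rw [Finset.card_compl, Fintype.card_fin, h3, hS, h2]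

/-- Extend `f` to a bijective enumeration of `S`, keeping values already in `S`. -/
noncomputable def step (f : Fin m' → Fin K') (S : Finset (Fin K')) : Fin m' → Fin K' :=
  if h : ((Finset.univ.filter (fun i => f i ∈ S))ᶜ).card
      = (S \ Finset.univ.image f).card then
    fun i => if hi : f i ∈ S then f i
      else ((Finset.equivOfCardEq h ⟨i, by simp [hi]⟩ : (S \ Finset.univ.image f : Finset (Fin K'))) : Fin K')
  else f

lemma step_spec (f : Fin m' → Fin K') (S : Finset (Fin K'))
    (hf : Function.Injective f) (hS : S.card = m') :
    Function.Injective (step f S) ∧ Finset.univ.image (step f S) = S ∧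
      (∀ i j, step f S i = f j → i = j) := by
  classical
  have hcard := card_aux f S hf hS
  have hstep : step f S = fun i => if hi : f i ∈ S then f i
      else ((Finset.equivOfCardEq hcard ⟨i, by simp [hi]⟩ :
        (S \ Finset.univ.image f : Finset (Fin K'))) : Fin K') := by
    rw [step, dif_pos hcard]
  have hmem : ∀ i, step f S i ∈ S := by
    intro i; rw [hstep]; dsimp only
    split
    · assumption
    · exact (Finset.mem_sdiff.mp (Finset.equivOfCardEq hcard _).2).1
  have hnot : ∀ i (hi : ¬ f i ∈ S), step f S i ∉ Finset.univ.image f := by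
    intro i hi
    rw [hstep]; dsimp only; rw [dif_neg hi]
    exact (Finset.mem_sdiff.mp (Finset.equivOfCardEq hcard _).2).2
  have heq : ∀ i (hi : f i ∈ S), step f S i = f i := by
    intro i hi; rw [hstep]; dsimp only; rw [dif_pos hi]
  have hcol : ∀ i j, step f S i = f j → i = j := by
    intro i j hij
    by_cases hi : f i ∈ S
    · exact hf ((heq i hi).symm.trans hij)
    · exact absurd (hij ▸ Finset.mem_image_of_mem f (Finset.mem_univ j)) (hnot i hi)
  have hinj : Function.Injective (step f S) := by
    intro i j hij
    by_cases hj : f j ∈ S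
    · exact hcol i j (hij.trans (heq j hj))
    · by_cases hi : f i ∈ S
      · exact (hcol j i (hij.symm.trans (heq i hi))).symm
      · have : (Finset.equivOfCardEq hcard ⟨i, by simp [hi]⟩ :
            (S \ Finset.univ.image f : Finset (Fin K'))) =
            (Finset.equivOfCardEq hcard ⟨j, by simp [hj]⟩ :
            (S \ Finset.univ.image f : Finset (Fin K'))) := by
          apply Subtype.ext
          have e1 := heq
          rw [hstep] at hij; dsimp only at hij
          rw [dif_neg hi, dif_neg hj] at hij
          exact hij
        have := (Finset.equivOfCardEq hcard).injective this
        exact Subtype.ext_iff.mp this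
  refine ⟨hinj, ?_, hcol⟩
  apply Finset.eq_of_subset_of_card_le
  · intro k hk
    obtain ⟨i, _, rfl⟩ := Finset.mem_image.mp hk
    exact hmem i
  · rw [hS, Finset.card_image_of_injective _ hinj, Finset.card_univ, Fintype.card_fin]

end Aux

/-- The collision-robust coloring: defined by recursion down the tree, at each child
extending the parent's enumeration so that shared elements keep their colors. -/
noncomputable def Fdef (hKm : m' ≤ K') (G : List (Finset (Fin K')) → Finset (Fin K')) :
    List (Finset (Fin K')) → Fin m' → Fin K'
  | [] => step (Fin.castLE hKm) (G [])
  | T :: l => step (Fdef hKm G l) (G (T :: l))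

/-- Lemma 2.8: for any G assigning to each vertex P of T_{K,m} a set G(P) ∈ Feas_P,
there is a collision-robust m-coloring F of T_{K,m} with F(P) enumerating G(P).
(Two vertices of T_{K,m} are at tree distance ≤ 1 iff they are equal or one is obtained
from the other by consing one more split.) -/
theorem stmt11 (K m : ℕ) (hm : 1 ≤ m) (hK : m ≤ K)
    (G : List (Finset (Fin K)) → Finset (Fin K))
    (hG : ∀ P, Valid K m P → Feas K m P (G P)) :
    ∃ F : List (Finset (Fin K)) → Fin m → Fin K,
      (∀ P, Valid K m P → Function.Injective (F P) ∧ Finset.univ.image (F P) = G P) ∧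
      (∀ P Q : List (Finset (Fin K)), Valid K m P → Valid K m Q →
        (P = Q ∨ (∃ T, P = T :: Q) ∨ (∃ T, Q = T :: P)) →
        ∀ i j : Fin m, F P i = F Q j → i = j) := by
  have key : ∀ P, Valid K m P → Function.Injective (Fdef hK G P) ∧
      Finset.univ.image (Fdef hK G P) = G P := by
    intro P hP
    induction P with
    | nil =>
        have hS : (G []).card = m := (hG [] trivial).1
        obtain ⟨h1, h2, _⟩ := step_spec (Fin.castLE hK) (G []) (Fin.castLE_injective hK) hS
        exact ⟨h1, h2⟩
    | cons T l ih =>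
        have hl : Valid K m l := hP.1
        have hS : (G (T :: l)).card = m := (hG _ hP).1
        obtain ⟨h1, h2, _⟩ := step_spec (Fdef hK G l) (G (T :: l)) (ih hl).1 hS
        exact ⟨h1, h2⟩
  refine ⟨Fdef hK G, key, ?_⟩
  intro P Q hP hQ hPQ i j hij
  rcases hPQ with rfl | ⟨T, rfl⟩ | ⟨T, rfl⟩
  · exact (key P hP).1 hij
  · have hS : (G (T :: Q)).card = m := (hG _ hP).1
    exact (step_spec (Fdef hK G Q) (G (T :: Q)) (key Q hQ).1 hS).2.2 i j hij
  · have hS : (G (T :: P)).card = m := (hG _ hQ).1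
    exact ((step_spec (Fdef hK G P) (G (T :: P)) (key P hP).1 hS).2.2 j i hij.symm).symm

end MPB
end
end
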